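/- arXiv:1705.07529 — 8 statements merged into one kernel-verified Lean document; each statement's English description precedes it below -/
import Mathlib

section
/- Let P be a super-uniform random variable (ℙ(P ≤ x) ≤ x for all x ∈ [0,1]), let m ≥ 1, q ∈ [0,1], and let B_1,…,B_m be pairwise disjoint events whose union has probability 1. If, setting A_t = B_1 ∪ ⋯ ∪ B_t, the conditional probabilities satisfy ℙ(A_s | P ≤ sq/m) ≤ ℙ(A_s | P ≤ (s+1)q/m) for all 1 ≤ s ≤ m−1, then ∑_{s=1}^{m} (1/s) ℙ(P ≤ sq/m, B_s) ≤ q/m. -/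
/-!
Super-uniformity gives `ℙ(P ≤ sq/m) ≤ s · q/m`, so the `s`-th term is at most
`(q/m) · ℙ(B_s | P ≤ sq/m)`. Since `B_s = A_s \ A_{s-1}`, the monotonicity hypothesis makes the
sum of these conditional probabilities telescope to at most `ℙ(A_m | P ≤ q) ≤ 1`.
-/

open MeasureTheory ProbabilityTheory Finset
open scoped ENNReal

section

variable {Ω : Type*} [MeasurableSpace Ω]

def SuperUniform (μ : Measure Ω) (P : Ω → ℝ) : Prop :=
  ∀ x ∈ Set.Icc (0 : ℝ) 1, μ {ω | P ω ≤ x} ≤ ENNReal.ofReal x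

lemma SuperUniform.measure_le_natCast_mul {μ : Measure Ω} {P : Ω → ℝ} (hP : SuperUniform μ P)
    {k m : ℕ} (hkm : k ≤ m) {q : ℝ} (hq : q ∈ Set.Icc (0 : ℝ) 1) :
    μ {ω | P ω ≤ (k : ℝ) * q / m} ≤ k * ENNReal.ofReal (q / m) := by
  have hkm' : (k : ℝ) ≤ m := by exact_mod_cast hkm
  have hx : (k : ℝ) * q / m ∈ Set.Icc (0 : ℝ) 1 :=
    ⟨by have := hq.1; positivity,
      div_le_one_of_le₀ (by nlinarith [hq.1, hq.2, (k.cast_nonneg : (0 : ℝ) ≤ k)]) m.cast_nonneg⟩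
  calc μ {ω | P ω ≤ (k : ℝ) * q / m} ≤ ENNReal.ofReal ((k : ℝ) * q / m) := hP _ hx
    _ = k * ENNReal.ofReal (q / m) := by
      rw [mul_div_assoc, ENNReal.ofReal_mul k.cast_nonneg, ENNReal.ofReal_natCast]

lemma inv_natCast_mul_measure_inter_le_mul_cond {μ : Measure Ω} [IsFiniteMeasure μ]
    {S t : Set Ω} (ht : MeasurableSet t) {k : ℕ} (hk : k ≠ 0) {c : ℝ≥0∞}
    (hS : μ S ≤ k * c) :
    (k : ℝ≥0∞)⁻¹ * μ (S ∩ t) ≤ c * μ[t | S] := by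
  have h_inter : μ (S ∩ t) = μ S * μ[t | S] := by
    rcases eq_or_ne (μ S) 0 with h | h
    · simp [h, measure_inter_null_of_null_left]
    · rw [cond_apply' ht, ← mul_assoc, ENNReal.mul_inv_cancel h (measure_ne_top _ _), one_mul]
  calc (k : ℝ≥0∞)⁻¹ * μ (S ∩ t) = (k : ℝ≥0∞)⁻¹ * μ S * μ[t | S] := by rw [h_inter, mul_assoc]
    _ ≤ (k : ℝ≥0∞)⁻¹ * (k * c) * μ[t | S] := by gcongr
    _ = c * μ[t | S] := by
      rw [← mul_assoc, ENNReal.inv_mul_cancel (by exact_mod_cast hk) (ENNReal.natCast_ne_top k),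
        one_mul]

lemma sum_measure_le_measure_biUnion_of_mono {ν : ℕ → Measure Ω} {B : ℕ → Set Ω}
    (hB : ∀ s, MeasurableSet (B s)) (n : ℕ)
    (hdisj : ∀ s ∈ Icc 1 n, ∀ t ∈ Icc 1 n, s ≠ t → Disjoint (B s) (B t))
    (hmono : ∀ s, 1 ≤ s → s < n →
      ν s (⋃ i ∈ Icc 1 s, B i) ≤ ν (s + 1) (⋃ i ∈ Icc 1 s, B i)) :
    ∑ s ∈ Icc 1 n, ν s (B s) ≤ ν n (⋃ i ∈ Icc 1 n, B i) := by
  induction n with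
  | zero => simp
  | succ n ih =>
    have hsub : Icc 1 n ⊆ Icc 1 (n + 1) := Icc_subset_Icc_right n.le_succ
    have ih := ih (fun s hs t ht => hdisj s (hsub hs) t (hsub ht))
      (fun s h1 h2 => hmono s h1 (by omega))
    have hsplit : ⋃ i ∈ Icc 1 (n + 1), B i = (⋃ i ∈ Icc 1 n, B i) ∪ B (n + 1) := by
      rw [← insert_Icc_right_eq_Icc_add_one (by omega), set_biUnion_insert, Set.union_comm]
    have hdisj_last : Disjoint (⋃ i ∈ Icc 1 n, B i) (B (n + 1)) :=
      Set.disjoint_iUnion₂_left.2 fun i hi =>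
        hdisj i (hsub hi) (n + 1) (by simp) (by simp at hi; omega)
    have hstep : ν n (⋃ i ∈ Icc 1 n, B i) ≤ ν (n + 1) (⋃ i ∈ Icc 1 n, B i) := by
      rcases n.eq_zero_or_pos with rfl | hn
      · simp
      · exact hmono n hn n.lt_succ_self
    calc ∑ s ∈ Icc 1 (n + 1), ν s (B s) = ∑ s ∈ Icc 1 n, ν s (B s) + ν (n + 1) (B (n + 1)) :=
          sum_Icc_succ_top (by omega) _
      _ ≤ ν (n + 1) (⋃ i ∈ Icc 1 n, B i) + ν (n + 1) (B (n + 1)) := by gcongr; exact ih.trans hstep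
      _ = ν (n + 1) (⋃ i ∈ Icc 1 (n + 1), B i) := by
        rw [hsplit, measure_union hdisj_last (hB _)]

end

theorem stmt2_general {Ω : Type*} [MeasurableSpace Ω] (μ : Measure Ω) [IsProbabilityMeasure μ]
    (P : Ω → ℝ)
    (hsup : ∀ x ∈ Set.Icc (0 : ℝ) 1, μ {ω | P ω ≤ x} ≤ ENNReal.ofReal x)
    (m : ℕ) (q : ℝ) (hq : q ∈ Set.Icc (0 : ℝ) 1)
    (B : ℕ → Set Ω) (hBmeas : ∀ s, MeasurableSet (B s))
    (hdisj : ∀ s ∈ Finset.Icc 1 m, ∀ t ∈ Finset.Icc 1 m, s ≠ t → Disjoint (B s) (B t))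
    (A : ℕ → Set Ω) (hA : ∀ t, A t = ⋃ s ∈ Finset.Icc 1 t, B s)
    (hmono : ∀ s, 1 ≤ s → s ≤ m - 1 →
      (ProbabilityTheory.cond μ {ω | P ω ≤ (s : ℝ) * q / m}) (A s) ≤
      (ProbabilityTheory.cond μ {ω | P ω ≤ ((s : ℝ) + 1) * q / m}) (A s)) :
    ∑ s ∈ Finset.Icc 1 m, (1 / (s : ℝ≥0∞)) * μ ({ω | P ω ≤ (s : ℝ) * q / m} ∩ B s) ≤
      ENNReal.ofReal (q / m) := by
  set S : ℕ → Set Ω := fun s => {ω | P ω ≤ (s : ℝ) * q / m}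
  have htel : ∑ s ∈ Icc 1 m, μ[B s | S s] ≤ μ[A m | S m] := by
    rw [hA]
    refine sum_measure_le_measure_biUnion_of_mono hBmeas m hdisj fun s h1 h2 => ?_
    have h := hmono s h1 (by omega)
    rw [hA] at h
    simpa only [S, Nat.cast_succ] using h
  calc ∑ s ∈ Icc 1 m, 1 / (s : ℝ≥0∞) * μ (S s ∩ B s)
      ≤ ∑ s ∈ Icc 1 m, ENNReal.ofReal (q / m) * μ[B s | S s] := by
        refine sum_le_sum fun s hs => ?_
        obtain ⟨hs1, hsm⟩ := mem_Icc.1 hs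
        rw [one_div]
        exact inv_natCast_mul_measure_inter_le_mul_cond (hBmeas s) (by omega)
          (SuperUniform.measure_le_natCast_mul hsup hsm hq)
    _ = ENNReal.ofReal (q / m) * ∑ s ∈ Icc 1 m, μ[B s | S s] := (mul_sum _ _ _).symm
    _ ≤ ENNReal.ofReal (q / m) * μ[A m | S m] := by gcongr
    _ ≤ ENNReal.ofReal (q / m) := mul_le_of_le_one_right' prob_le_one

/-- Key telescoping step for FDR control under PRDS: for a super-uniform `P`,
disjoint events `B 1, …, B m` whose union has probability one, and monotone
conditional probabilities of the increasing unions `A s = B 1 ∪ ⋯ ∪ B s`,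
we get `∑_{s=1}^m (1/s) ℙ(P ≤ sq/m, B s) ≤ q/m`. -/
theorem stmt2 {Ω : Type*} [MeasurableSpace Ω] (μ : Measure Ω) [IsProbabilityMeasure μ]
    (P : Ω → ℝ) (hP : Measurable P)
    (hsup : ∀ x ∈ Set.Icc (0 : ℝ) 1, μ {ω | P ω ≤ x} ≤ ENNReal.ofReal x)
    (m : ℕ) (hm : 1 ≤ m) (q : ℝ) (hq : q ∈ Set.Icc (0 : ℝ) 1)
    (B : ℕ → Set Ω) (hBmeas : ∀ s, MeasurableSet (B s))
    (hdisj : ∀ s ∈ Finset.Icc 1 m, ∀ t ∈ Finset.Icc 1 m, s ≠ t → Disjoint (B s) (B t))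
    (hcover : μ (⋃ s ∈ Finset.Icc 1 m, B s) = 1)
    (A : ℕ → Set Ω) (hA : ∀ t, A t = ⋃ s ∈ Finset.Icc 1 t, B s)
    (hmono : ∀ s, 1 ≤ s → s ≤ m - 1 →
      (ProbabilityTheory.cond μ {ω | P ω ≤ (s : ℝ) * q / m}) (A s) ≤
      (ProbabilityTheory.cond μ {ω | P ω ≤ ((s : ℝ) + 1) * q / m}) (A s)) :
    ∑ s ∈ Finset.Icc 1 m, (1 / (s : ℝ≥0∞)) * μ ({ω | P ω ≤ (s : ℝ) * q / m} ∩ B s) ≤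
      ENNReal.ofReal (q / m) :=
  stmt2_general μ P hsup m q hq B hBmeas hdisj A hA hmono
end

section
/- Let p_1,…,p_k be independent random variables each uniformly distributed on [0,1], and let p_{(1)} ≤ ⋯ ≤ p_{(k)} denote their order statistics. Then the Simes statistic S = min_{1≤j≤k} (k/j)·p_{(j)} satisfies ℙ(S ≤ α) = α for every α ∈ [0,1]. -/
/-!
Write `A n β u` for the set of `x ∈ [0, u]ⁿ` with `#{i | x i ≤ β (j + 1)} ≤ j` for every `j`.
The complement of the Simes event `S ≤ α` is the event that the vector of p-values lies in
`A k (α / k) 1`, and by independence its probability is the Lebesgue volume of that set.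

By induction on `n`, `vol (A n β u) = uⁿ - n β uⁿ⁻¹` whenever `n β ≤ u`. The set is invariant
under permuting coordinates, so up to the null set of ties it splits into `n + 1` pieces of
equal volume according to which coordinate is maximal. On the piece where the last coordinate
`w` is maximal, the constraint for `j = n` forces `w > β (n + 1)`, after which the constraints
involve only the other coordinates, which range exactly over `A n β w`. Integrating the
induction hypothesis over `w ∈ (β (n + 1), u]` gives the formula for `n + 1`.
-/

open MeasureTheory ProbabilityTheory Set Finset

section MaxDecomposition

variable {ι : Type*} [Fintype ι]

theorem volume_setOf_apply_eq_apply {i j : ι} (hij : i ≠ j) :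
    volume {x : ι → ℝ | x i = x j} = 0 := by
  classical
  let L : (ι → ℝ) →ₗ[ℝ] ℝ := LinearMap.proj (R := ℝ) (φ := fun _ => ℝ) i - LinearMap.proj j
  have hker : {x : ι → ℝ | x i = x j} = LinearMap.ker L := by
    ext x
    simp [L, sub_eq_zero]
  rw [hker]
  refine Measure.addHaar_submodule _ _ fun htop => ?_
  have : Pi.single i (1 : ℝ) ∈ LinearMap.ker L := htop ▸ Submodule.mem_top
  simp [L, hij.symm] at this

theorem measurableSet_setOf_forall_apply_le (i : ι) :
    MeasurableSet {x : ι → ℝ | ∀ l, x l ≤ x i} := by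
  simp only [ofPred_forall]
  exact .iInter fun l => measurableSet_le (measurable_pi_apply l) (measurable_pi_apply i)

theorem volume_eq_sum_volume_inter_setOf_forall_apply_le [Nonempty ι] {s : Set (ι → ℝ)}
    (hs : NullMeasurableSet s) :
    volume s = ∑ i, volume (s ∩ {x | ∀ l, x l ≤ x i}) := by
  have hcover : s = ⋃ i, s ∩ {x | ∀ l, x l ≤ x i} := by
    refine Set.eq_of_subset_of_subset (fun x hx => ?_) (iUnion_subset fun _ => inter_subset_left)
    obtain ⟨i, -, hi⟩ := Finset.exists_max_image univ x univ_nonempty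
    exact mem_iUnion.2 ⟨i, hx, fun l => hi l (mem_univ l)⟩
  conv_lhs => rw [hcover]
  rw [measure_iUnion₀ _ fun i => hs.inter (measurableSet_setOf_forall_apply_le i).nullMeasurableSet,
    tsum_fintype]
  intro i j hij
  refine measure_mono_null (fun x hx => ?_) (volume_setOf_apply_eq_apply hij)
  exact le_antisymm (hx.2.2 i) (hx.1.2 j)

theorem volume_inter_setOf_forall_apply_le_eq [DecidableEq ι] {s : Set (ι → ℝ)}
    (hs : ∀ (σ : Equiv.Perm ι) (x : ι → ℝ), x ∘ σ ∈ s ↔ x ∈ s) (i j : ι) :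
    volume (s ∩ {x | ∀ l, x l ≤ x i}) = volume (s ∩ {x | ∀ l, x l ≤ x j}) := by
  let σ := Equiv.swap i j
  let e := (MeasurableEquiv.piCongrLeft (fun _ => ℝ) σ).symm
  have he : ∀ x, e x = x ∘ σ := fun _ => rfl
  have hpre : e ⁻¹' (s ∩ {x | ∀ l, x l ≤ x i}) = s ∩ {x | ∀ l, x l ≤ x j} := by
    ext x
    rw [Set.mem_preimage, he, mem_inter_iff, mem_inter_iff, hs]
    refine and_congr_right fun _ => ⟨fun h l => ?_, fun h l => ?_⟩ <;> simpa [σ] using h (σ l)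
  rw [← hpre, ((volume_measurePreserving_piCongrLeft (fun _ => ℝ) σ).symm).measure_preimage_equiv]

theorem volume_eq_card_mul_volume_inter_setOf_forall_apply_le [DecidableEq ι] {s : Set (ι → ℝ)}
    (hs : NullMeasurableSet s) (hσ : ∀ (σ : Equiv.Perm ι) (x : ι → ℝ), x ∘ σ ∈ s ↔ x ∈ s)
    (i : ι) : volume s = Fintype.card ι * volume (s ∩ {x | ∀ l, x l ≤ x i}) := by
  have : Nonempty ι := ⟨i⟩
  rw [volume_eq_sum_volume_inter_setOf_forall_apply_le hs,
    Finset.sum_congr rfl fun j _ => volume_inter_setOf_forall_apply_le_eq hσ j i,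
    Finset.sum_const, Finset.card_univ, nsmul_eq_mul]

end MaxDecomposition

theorem volume_eq_lintegral_volume_setOf_snoc_mem {n : ℕ} {s : Set (Fin (n + 1) → ℝ)}
    (hs : MeasurableSet s) :
    volume s = ∫⁻ u, volume {y : Fin n → ℝ | Fin.snoc y u ∈ s} := by
  let e := MeasurableEquiv.piFinSuccAbove (fun _ : Fin (n + 1) => ℝ) (Fin.last n)
  have he : ∀ q : ℝ × (Fin n → ℝ), e.symm q = Fin.snoc q.2 q.1 := fun q => by
    simp [e, Fin.snocEquiv]
  have hmp := (measurePreserving_piFinSuccAbove (fun _ : Fin (n + 1) => (volume : Measure ℝ))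
    (Fin.last n)).symm e
  rw [volume_pi, ← hmp.measure_preimage_equiv, Measure.prod_apply (e.symm.measurable hs)]
  simp only [Set.preimage, he]
  rfl

theorem measurable_card_filter_apply_le {ι : Type*} [Fintype ι] (c : ℝ) :
    Measurable fun x : ι → ℝ => #{i | x i ≤ c} := by
  simp_rw [Finset.card_filter]
  exact Finset.measurable_sum _ fun i _ => .ite
    (measurableSet_le (measurable_pi_apply i) measurable_const) measurable_const measurable_const

theorem card_filter_comp_perm_apply_le {ι : Type*} [Fintype ι] (σ : Equiv.Perm ι) (x : ι → ℝ)
    (c : ℝ) : #{i | x (σ i) ≤ c} = #{i | x i ≤ c} :=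
  Finset.card_equiv σ (by simp)

theorem card_filter_snoc_le {n : ℕ} (y : Fin n → ℝ) (u c : ℝ) :
    #{i | (Fin.snoc y u : Fin (n + 1) → ℝ) i ≤ c} = #{i | y i ≤ c} + if u ≤ c then 1 else 0 := by
  rw [Finset.card_filter, Finset.card_filter, Fin.sum_univ_castSucc]
  simp only [Fin.snoc_castSucc, Fin.snoc_last]

theorem mul_sort_le_iff_lt_card {k : ℕ} (hk : 0 < k) (x : Fin k → ℝ) (α : ℝ) (j : Fin k) :
    (k : ℝ) / ((j : ℕ) + 1) * x (Tuple.sort x j) ≤ α ↔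
      (j : ℕ) < #{i | x i ≤ α / k * ((j : ℕ) + 1)} := by
  have hsorted := Tuple.lt_card_le_iff_apply_le_of_monotone (j := j)
    (a := α / k * ((j : ℕ) + 1)) (Tuple.monotone_sort x)
  simp only [Function.comp_apply, card_filter_comp_perm_apply_le] at hsorted
  rw [hsorted, div_mul_eq_mul_div, div_le_iff₀ (by positivity), div_mul_eq_mul_div,
    le_div_iff₀ (by positivity), mul_comm]

theorem integral_pow_sub_mul_pow_pred (n : ℕ) (β a b : ℝ) :
    ∫ u in a..b, (u ^ n - n * β * u ^ (n - 1)) =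
      (b ^ (n + 1) - a ^ (n + 1)) / (n + 1) - β * (b ^ n - a ^ n) := by
  rw [intervalIntegral.integral_eq_sub_of_hasDerivAt
    (f := fun u => u ^ (n + 1) / (n + 1) - β * u ^ n) (fun u _ => ?_)
    (Continuous.intervalIntegrable (by fun_prop) a b)]
  · ring
  · convert ((hasDerivAt_pow (n + 1) u).div_const ((n : ℝ) + 1)).sub
      ((hasDerivAt_pow n u).const_mul β) using 1
    · rfl
    · rw [Nat.add_sub_cancel]
      push_cast
      field_simp

theorem pow_sub_mul_pow_pred_nonneg {n : ℕ} {β u : ℝ} (hu : 0 ≤ u) (h : n * β ≤ u) :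
    0 ≤ u ^ n - n * β * u ^ (n - 1) := by
  cases n with
  | zero => simp
  | succ n =>
    have hfactor : u ^ (n + 1) - (n + 1 : ℕ) * β * u ^ (n + 1 - 1) =
        u ^ n * (u - (n + 1 : ℕ) * β) := by
      rw [Nat.add_sub_cancel]; ring
    rw [hfactor]
    exact mul_nonneg (pow_nonneg hu n) (sub_nonneg.2 h)

theorem lintegral_Ioc_pow_sub_mul_pow_pred {n : ℕ} {β u : ℝ} (hβ : 0 ≤ β)
    (hu : β * (n + 1) ≤ u) :
    ∫⁻ w in Ioc (β * (n + 1)) u, ENNReal.ofReal (w ^ n - n * β * w ^ (n - 1)) =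
      ENNReal.ofReal ((u ^ (n + 1) - (n + 1) * β * u ^ n) / (n + 1)) := by
  rw [← ofReal_integral_eq_lintegral_ofReal, ← intervalIntegral.integral_of_le hu,
    integral_pow_sub_mul_pow_pred]
  · congr 1
    field_simp
    ring
  · exact Continuous.integrableOn_Ioc (by fun_prop)
  · refine (ae_restrict_iff' measurableSet_Ioc).2 (.of_forall fun w hw => ?_)
    refine pow_sub_mul_pow_pred_nonneg ((by positivity : 0 ≤ β * (n + 1)).trans hw.1.le) ?_
    nlinarith [hw.1]

namespace Simes

/-- By `Tuple.lt_card_le_iff_apply_le_of_monotone`, `x` lies here iff its `(j + 1)`-st order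
statistic exceeds `β (j + 1)` for every `j`, i.e. Simes' test does not reject at level `n β`. -/
def acceptanceRegion (n : ℕ) (β : ℝ) : Set (Fin n → ℝ) :=
  {x | ∀ j : Fin n, #{i | x i ≤ β * ((j : ℕ) + 1)} ≤ j}

theorem measurableSet_acceptanceRegion (n : ℕ) (β : ℝ) :
    MeasurableSet (acceptanceRegion n β) := by
  simp only [acceptanceRegion, ofPred_forall]
  exact .iInter fun _ => measurableSet_le (measurable_card_filter_apply_le _) measurable_const

theorem comp_perm_mem_cube_inter_acceptanceRegion_iff {n : ℕ} {β u : ℝ}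
    (σ : Equiv.Perm (Fin n)) (x : Fin n → ℝ) :
    x ∘ σ ∈ univ.pi (fun _ => Icc 0 u) ∩ acceptanceRegion n β ↔
      x ∈ univ.pi (fun _ => Icc 0 u) ∩ acceptanceRegion n β := by
  simp only [acceptanceRegion, mem_inter_iff, mem_univ_pi, mem_ofPred_eq, Function.comp_apply,
    card_filter_comp_perm_apply_le]
  exact and_congr_left' ⟨fun h i => by simpa using h (σ.symm i), fun h i => h (σ i)⟩

theorem snoc_mem_acceptanceRegion_iff {n : ℕ} {β u : ℝ} (hβ : 0 ≤ β) (hu : β * (n + 1) < u)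
    (y : Fin n → ℝ) :
    Fin.snoc y u ∈ acceptanceRegion (n + 1) β ↔ y ∈ acceptanceRegion n β := by
  have hlt : ∀ j : Fin n, ¬ u ≤ β * ((j : ℕ) + 1) := fun j => by
    have : ((j : ℕ) : ℝ) ≤ n := by exact_mod_cast j.isLt.le
    exact not_le.2 (lt_of_le_of_lt (by gcongr) hu)
  simp only [acceptanceRegion, mem_ofPred_eq, Fin.forall_fin_succ' (n := n), card_filter_snoc_le,
    Fin.val_castSucc, Fin.val_last, hlt, not_le.2 hu, if_false, add_zero]
  exact and_iff_left (card_filter_le _ _ |>.trans_eq (card_fin n))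

theorem lt_of_snoc_mem_acceptanceRegion {n : ℕ} {β u : ℝ} {y : Fin n → ℝ}
    (hy : ∀ m, y m ≤ u) (h : Fin.snoc y u ∈ acceptanceRegion (n + 1) β) : β * (n + 1) < u := by
  by_contra! hle
  have hall : #{i | y i ≤ β * (n + 1)} = n := by
    rw [Finset.filter_true_of_mem fun m _ => (hy m).trans hle, card_univ, Fintype.card_fin]
  have := h (Fin.last n)
  simp only [Fin.val_last, card_filter_snoc_le] at this
  rw [hall, if_pos hle] at this
  omega

theorem snoc_mem_cube_inter_acceptanceRegion_iff {n : ℕ} {β u v : ℝ} (hβ : 0 ≤ β)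
    (y : Fin n → ℝ) :
    Fin.snoc y u ∈ univ.pi (fun _ => Icc 0 v) ∩ acceptanceRegion (n + 1) β ∩
        {x | ∀ l, x l ≤ x (Fin.last n)} ↔
      u ∈ Ioc (β * (n + 1)) v ∧ y ∈ univ.pi (fun _ => Icc 0 u) ∩ acceptanceRegion n β := by
  simp only [mem_inter_iff, mem_univ_pi, mem_ofPred_eq, Fin.forall_fin_succ' (n := n),
    Fin.snoc_castSucc, Fin.snoc_last, Set.mem_Icc, Set.mem_Ioc, le_refl, and_true]
  constructor
  · rintro ⟨⟨⟨hy, hu⟩, hacc⟩, hmax⟩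
    have hβu := lt_of_snoc_mem_acceptanceRegion hmax hacc
    exact ⟨⟨hβu, hu.2⟩, fun m => ⟨(hy m).1, hmax m⟩,
      (snoc_mem_acceptanceRegion_iff hβ hβu y).1 hacc⟩
  · rintro ⟨⟨hβu, huv⟩, hy, hacc⟩
    have hu : 0 ≤ u := (by positivity : 0 ≤ β * (n + 1)).trans hβu.le
    exact ⟨⟨⟨fun m => ⟨(hy m).1, (hy m).2.trans huv⟩, hu, huv⟩,
      (snoc_mem_acceptanceRegion_iff hβ hβu y).2 hacc⟩, fun m => (hy m).2⟩

theorem volume_setOf_snoc_mem_cube_inter_acceptanceRegion {n : ℕ} {β : ℝ} (hβ : 0 ≤ β)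
    (u w : ℝ) :
    volume {y | Fin.snoc y w ∈ univ.pi (fun _ => Icc 0 u) ∩ acceptanceRegion (n + 1) β ∩
        {x | ∀ l, x l ≤ x (Fin.last n)}} =
      (Ioc (β * (n + 1)) u).indicator
        (fun w => volume (univ.pi (fun _ => Icc 0 w) ∩ acceptanceRegion n β)) w := by
  simp only [snoc_mem_cube_inter_acceptanceRegion_iff hβ]
  by_cases hw : w ∈ Ioc (β * (n + 1)) u
  · simp only [hw, true_and, ofPred_mem_eq, indicator_of_mem]
  · simp [hw]

theorem volume_cube_inter_acceptanceRegion (n : ℕ) {β u : ℝ} (hβ : 0 ≤ β) (hu : n * β ≤ u) :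
    volume (univ.pi (fun _ => Icc 0 u) ∩ acceptanceRegion n β) =
      ENNReal.ofReal (u ^ n - n * β * u ^ (n - 1)) := by
  induction n generalizing u with
  | zero =>
    have huniv : univ.pi (fun _ : Fin 0 => Icc (0 : ℝ) u) ∩ acceptanceRegion 0 β = univ := by
      ext x
      simp [acceptanceRegion]
    rw [huniv, volume_pi, Measure.pi_univ]
    simp
  | succ n ih =>
    push_cast at hu
    have hs :
        MeasurableSet (univ.pi (fun _ : Fin (n + 1) => Icc 0 u) ∩ acceptanceRegion (n + 1) β) :=
      (MeasurableSet.univ_pi fun _ => measurableSet_Icc).inter (measurableSet_acceptanceRegion _ _)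
    have hslice : ∀ w ∈ Ioc (β * (n + 1)) u,
        volume (univ.pi (fun _ => Icc 0 w) ∩ acceptanceRegion n β) =
          ENNReal.ofReal (w ^ n - n * β * w ^ (n - 1)) :=
      fun w hw => ih (by nlinarith [hw.1])
    rw [volume_eq_card_mul_volume_inter_setOf_forall_apply_le hs.nullMeasurableSet
        comp_perm_mem_cube_inter_acceptanceRegion_iff (Fin.last n),
      volume_eq_lintegral_volume_setOf_snoc_mem (hs.inter (measurableSet_setOf_forall_apply_le _)),
      lintegral_congr (volume_setOf_snoc_mem_cube_inter_acceptanceRegion hβ u),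
      lintegral_indicator measurableSet_Ioc, setLIntegral_congr_fun measurableSet_Ioc hslice,
      lintegral_Ioc_pow_sub_mul_pow_pred hβ (by linarith), Fintype.card_fin,
      ← ENNReal.ofReal_natCast, ← ENNReal.ofReal_mul (by positivity)]
    congr 1
    push_cast
    field_simp

end Simes

open Simes

/-- Simes (1986): if `p 1, …, p k` are independent Uniform[0,1] p-values, then the
Simes statistic `S = min_j (k/j)·p_{(j)}` is exactly uniform:
`ℙ(S ≤ α) = α` for all `α ∈ [0,1]`.  (`S ≤ α` is expressed as
`∃ j, (k/(j+1))·p_{(j+1)} ≤ α` where `p_{(j+1)} = p (Tuple.sort p j)` is the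
`(j+1)`-st order statistic.) -/
theorem stmt3 {Ω : Type*} [MeasurableSpace Ω] (μ : Measure Ω) [IsProbabilityMeasure μ]
    (k : ℕ) (hk : 0 < k) (p : Fin k → Ω → ℝ) (hmeas : ∀ i, Measurable (p i))
    (hindep : ProbabilityTheory.iIndepFun p μ)
    (hunif : ∀ i, Measure.map (p i) μ = volume.restrict (Set.Icc (0 : ℝ) 1))
    (α : ℝ) (hα : α ∈ Set.Icc (0 : ℝ) 1) :
    μ {ω | ∃ j : Fin k,
        ((k : ℝ) / ((j : ℕ) + 1)) * (fun i => p i ω) (Tuple.sort (fun i => p i ω) j) ≤ α} =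
      ENNReal.ofReal α := by
  obtain ⟨hα0, hα1⟩ := hα
  have hX : Measurable fun ω i => p i ω := measurable_pi_lambda _ hmeas
  have hA := measurableSet_acceptanceRegion k (α / k)
  have hlaw : μ.map (fun ω i => p i ω) = volume.restrict (univ.pi fun _ => Icc (0 : ℝ) 1) := by
    rw [(iIndepFun_iff_map_fun_eq_pi_map fun i => (hmeas i).aemeasurable).1 hindep, volume_pi,
      Measure.restrict_pi_pi]
    simp_rw [hunif]
  have hevent : {ω | ∃ j : Fin k,
      ((k : ℝ) / ((j : ℕ) + 1)) * (fun i => p i ω) (Tuple.sort (fun i => p i ω) j) ≤ α} =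
      (fun ω i => p i ω) ⁻¹' (acceptanceRegion k (α / k))ᶜ := by
    ext ω
    simp only [mem_ofPred_eq, Set.mem_preimage, Set.mem_compl_iff, acceptanceRegion, not_forall,
      not_le]
    exact exists_congr fun j => mul_sort_le_iff_lt_card hk (fun i => p i ω) α j
  have hacc : volume (univ.pi (fun _ => Icc 0 1) ∩ acceptanceRegion k (α / k)) =
      ENNReal.ofReal (1 - α) := by
    rw [volume_cube_inter_acceptanceRegion k (by positivity) (by field_simp; exact hα1)]
    congr 1
    field_simp
    simp
  have := Measure.isProbabilityMeasure_map (μ := μ) hX.aemeasurable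
  rw [hevent, ← Measure.map_apply hX hA.compl, prob_compl_eq_one_sub hA, hlaw,
    Measure.restrict_apply hA, Set.inter_comm, hacc, ← ENNReal.ofReal_one,
    ← ENNReal.ofReal_sub _ (sub_nonneg.2 hα1), sub_sub_cancel]
end

section
/- The Benjamini–Hochberg selection rule is simple: fix a level q ∈ (0,1), a vector of p-values p ∈ [0,1]^m, and suppose hypothesis j is rejected by the BH procedure at level q. If the coordinates of p other than p_j are held fixed and p_j is replaced by any value p'_j such that j is still rejected by BH, then the total number of BH rejections is unchanged. -/
open Classical in
/-- The number of rejections of the Benjamini–Hochberg procedure at level `q` on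
`p ∈ [0,1]^m`: `R = max { r : p_{(r)} ≤ r·q/m }` (with `R = 0` if the set is
empty), where `p_{(j+1)} = p (Tuple.sort p j)` is the `(j+1)`-st order statistic. -/
noncomputable def bhCount (m : ℕ) (q : ℝ) (p : Fin m → ℝ) : ℕ :=
  (Finset.univ.filter
      (fun j : Fin m => p (Tuple.sort p j) ≤ ((j : ℕ) + 1) * q / m)).sup
    (fun j => (j : ℕ) + 1)

/-- BH rejects hypothesis `j` iff `p j ≤ R·q/m` where `R` is the number of
rejections. -/
def bhRejects (m : ℕ) (q : ℝ) (p : Fin m → ℝ) (j : Fin m) : Prop :=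
  p j ≤ (bhCount m q p : ℝ) * q / m

/-!
Write `N_p(t) = #{i | p i ≤ t}`; then `p_{(r)} ≤ t ↔ r ≤ N_p(t)`, so the BH count `R` is the
largest `r` with `r ≤ N_p(r q / m)`. Swapping `p` and `p'` if necessary, `R` is the larger of the
two counts, so `p j` and `p' j` both lie below `R q / m`. Then `N_p` and `N_{p'}` agree at every
level `r q / m` with `r ≥ R`, and a maximum is unaffected by changing the condition only below it.
-/

open Finset

namespace Finset

variable {ι α : Type*} [LinearOrder α] [OrderBot α]

theorem sup_filter_eq_of_forall_sup_le {s : Finset ι} {f : ι → α} {P Q : ι → Prop}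
    [DecidablePred P] [DecidablePred Q]
    (hPQ : ∀ i ∈ s, (s.filter P).sup f ≤ f i → (Q i ↔ P i)) :
    (s.filter Q).sup f = (s.filter P).sup f := by
  refine le_antisymm (Finset.sup_le fun i hi => ?_) ?_
  · obtain ⟨his, hQ⟩ := mem_filter.1 hi
    by_contra! hlt
    exact (le_sup (mem_filter.2 ⟨his, (hPQ i his hlt.le).1 hQ⟩)).not_gt hlt
  · rcases (s.filter P).eq_empty_or_nonempty with hempty | hne
    · simp [hempty]
    obtain ⟨i, hi, hsup⟩ := exists_mem_eq_sup _ hne f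
    obtain ⟨his, hP⟩ := mem_filter.1 hi
    exact hsup ▸ le_sup (mem_filter.2 ⟨his, (hPQ i his hsup.le).2 hP⟩)

end Finset

theorem Tuple.apply_sort_le_iff {α : Type*} [LinearOrder α] {m : ℕ} (p : Fin m → α) (r : Fin m)
    (t : α) :
    p (Tuple.sort p r) ≤ t ↔ (r : ℕ) + 1 ≤ #{i | p i ≤ t} := by
  have hcard : #{i | (p ∘ Tuple.sort p) i ≤ t} = #{i | p i ≤ t} :=
    card_equiv (Tuple.sort p) (by simp)
  rw [← Function.comp_apply (f := p),
    ← Tuple.lt_card_le_iff_apply_le_of_monotone (Tuple.monotone_sort p), hcard,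
    Nat.lt_iff_add_one_le]

theorem card_filter_le_eq_of_eq_of_ne {ι α : Type*} [Fintype ι] [Preorder α]
    [DecidableLE α] {p p' : ι → α} {j : ι} {s t : α}
    (hfix : ∀ i, i ≠ j → p' i = p i) (hpj : p j ≤ s) (hpj' : p' j ≤ s) (hst : s ≤ t) :
    #{i | p' i ≤ t} = #{i | p i ≤ t} := by
  refine congrArg card (filter_congr fun i _ => ?_)
  rcases eq_or_ne i j with rfl | hij
  · exact ⟨fun _ => hpj.trans hst, fun _ => hpj'.trans hst⟩
  · rw [hfix i hij]

theorem bhCount_eq_of_le_threshold {m : ℕ} {q : ℝ} (hq : 0 ≤ q) {p p' : Fin m → ℝ} {j : Fin m}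
    (hfix : ∀ i, i ≠ j → p' i = p i)
    (hpj : p j ≤ (bhCount m q p : ℝ) * q / m) (hpj' : p' j ≤ (bhCount m q p : ℝ) * q / m) :
    bhCount m q p' = bhCount m q p := by
  unfold bhCount
  refine sup_filter_eq_of_forall_sup_le fun r _ hr => ?_
  rw [Tuple.apply_sort_le_iff, Tuple.apply_sort_le_iff,
    card_filter_le_eq_of_eq_of_ne hfix hpj hpj' ?_]
  have hr' : (bhCount m q p : ℝ) ≤ (r : ℕ) + 1 := by unfold bhCount; exact_mod_cast hr
  gcongr

theorem stmt6_general (m : ℕ) (q : ℝ) (hq : q ∈ Set.Ioo (0 : ℝ) 1) (p p' : Fin m → ℝ)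
    (j : Fin m) (hfix : ∀ i, i ≠ j → p' i = p i)
    (hrej : bhRejects m q p j) (hrej' : bhRejects m q p' j) :
    bhCount m q p' = bhCount m q p := by
  have hq0 : 0 ≤ q := hq.1.le
  rcases le_total (bhCount m q p) (bhCount m q p') with hle | hle
  · refine (bhCount_eq_of_le_threshold hq0 (fun i hi => (hfix i hi).symm) hrej' ?_).symm
    exact hrej.trans (by gcongr)
  · exact bhCount_eq_of_le_threshold hq0 hfix hrej (hrej'.trans (by gcongr))

/-- The BH selection rule is *simple*: if hypothesis `j` is rejected at level `q`,
and `p j` is changed to any value such that `j` is still rejected while all other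
p-values are held fixed, then the total number of rejections is unchanged. -/
theorem stmt6 (m : ℕ) (q : ℝ) (hq : q ∈ Set.Ioo (0 : ℝ) 1) (p p' : Fin m → ℝ)
    (hp : ∀ i, p i ∈ Set.Icc (0 : ℝ) 1) (hp' : ∀ i, p' i ∈ Set.Icc (0 : ℝ) 1)
    (j : Fin m) (hfix : ∀ i, i ≠ j → p' i = p i)
    (hrej : bhRejects m q p j) (hrej' : bhRejects m q p' j) :
    bhCount m q p' = bhCount m q p :=
  stmt6_general m q hq p p' j hfix hrej hrej'
end

section
/- For the BH procedure at level q on m p-values, the number of rejections R(p), as a function of a vector p ∈ [0,1]^m in which the j-th coordinate is rejected, is determined entirely by the other m−1 coordinates: if j is rejected, then R(p) = 1 + max{ r ∈ {0,…,m−1} : p^{(j)}_{(r)} ≤ (r+1)q/m }, where p^{(j)}_{(1)} ≤ ⋯ ≤ p^{(j)}_{(m−1)} are the order statistics of the p-values excluding p_j (with the convention that the maximum over the empty condition-set is 0). -/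
open Finset

theorem Tuple.sort_apply_le_iff {α : Type*} [LinearOrder α] {m : ℕ} (f : Fin m → α) (a : α)
    (k : Fin m) : f (Tuple.sort f k) ≤ a ↔ (k : ℕ) + 1 ≤ #{i | f i ≤ a} := by
  have hcard : #{i | (f ∘ Tuple.sort f) i ≤ a} = #{i | f i ≤ a} :=
    card_equiv (Tuple.sort f) (by simp)
  rw [← Function.comp_apply (f := f),
    ← Tuple.lt_card_le_iff_apply_le_of_monotone (Tuple.monotone_sort f), hcard, Order.add_one_le_iff]

theorem Fin.card_filter_univ_succAbove_of_pos {n : ℕ} (P : Fin (n + 1) → Prop) [DecidablePred P]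
    {j : Fin (n + 1)} (hj : P j) : #{i | P i} = #{i | P (j.succAbove i)} + 1 := by
  rw [Fin.univ_succAbove n j, filter_cons_of_pos _ _ _ _ hj, card_cons, filter_map, card_map]
  rfl

theorem sup_filter_univ_fin_succ_eq_findGreatest {m : ℕ} (P : ℕ → Prop) [DecidablePred P] :
    ({k : Fin m | P (k + 1)} : Finset (Fin m)).sup (fun k => (k : ℕ) + 1) = Nat.findGreatest P m := by
  apply le_antisymm
  · exact Finset.sup_le fun k hk => Nat.le_findGreatest k.isLt (mem_filter.1 hk).2
  · obtain h0 | hpos := (Nat.findGreatest P m).eq_zero_or_pos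
    · simp [h0]
    · set r := Nat.findGreatest P m
      have hr : r - 1 < m := by have := Nat.findGreatest_le (P := P) m; omega
      have hPr : P (r - 1 + 1) := by
        rw [Nat.sub_add_cancel hpos]; exact Nat.findGreatest_of_ne_zero rfl hpos.ne'
      have := le_sup (f := fun k : Fin m => (k : ℕ) + 1) (s := {k : Fin m | P (k + 1)})
        (b := ⟨r - 1, hr⟩) (mem_filter.2 ⟨mem_univ _, hPr⟩)
      simp only at this
      omega

theorem sup_filter_sort_le_eq_findGreatest {α : Type*} [LinearOrder α] {m : ℕ} (f : Fin m → α)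
    (g : ℕ → α) :
    ({k : Fin m | f (Tuple.sort f k) ≤ g (k + 1)} : Finset (Fin m)).sup (fun k => (k : ℕ) + 1) =
      Nat.findGreatest (fun r => r ≤ #{i | f i ≤ g r}) m := by
  simp_rw [Tuple.sort_apply_le_iff]
  exact sup_filter_univ_fin_succ_eq_findGreatest (fun r => r ≤ #{i | f i ≤ g r})

theorem bhCount_eq_findGreatest (m : ℕ) (q : ℝ) (p : Fin m → ℝ) :
    bhCount m q p = Nat.findGreatest (fun r => r ≤ #{i | p i ≤ r * q / m}) m := by
  rw [bhCount, ← sup_filter_sort_le_eq_findGreatest p (fun r : ℕ => r * q / m)]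
  simp only [Nat.cast_add, Nat.cast_one]

section BH

variable {m : ℕ} {q : ℝ} {p : Fin m → ℝ}

theorem bhCount_le : bhCount m q p ≤ m := by
  rw [bhCount_eq_findGreatest]
  exact Nat.findGreatest_le m

theorem bhCount_le_card : bhCount m q p ≤ #{i | p i ≤ bhCount m q p * q / m} := by
  rw [bhCount_eq_findGreatest]
  exact Nat.findGreatest_spec (P := fun r => r ≤ #{i | p i ≤ r * q / m}) (m := 0)
    (Nat.zero_le m) (Nat.zero_le _)

theorem card_lt_of_bhCount_lt {k : ℕ} (hk : bhCount m q p < k) (hkm : k ≤ m) :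
    #{i | p i ≤ k * q / m} < k := by
  rw [bhCount_eq_findGreatest] at hk
  exact not_le.1 <|
    Nat.findGreatest_is_greatest (P := fun r => r ≤ #{i | p i ≤ r * q / m}) hk hkm

theorem bhCount_pos_of_bhRejects (hq : 0 < q) {j : Fin m} (hj : bhRejects m q p j) :
    0 < bhCount m q p := by
  by_contra! h0
  have hpj : p j ≤ 0 := by simpa [bhRejects, Nat.le_zero.1 h0] using hj
  have hcard := card_lt_of_bhCount_lt (q := q) (p := p) (k := 1) (by omega) (Fin.pos j)
  have hmem : j ∈ ({i | p i ≤ (1 : ℕ) * q / m} : Finset (Fin m)) := by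
    rw [mem_filter]
    exact ⟨mem_univ j, hpj.trans (by positivity)⟩
  exact (card_pos.2 ⟨j, hmem⟩).ne' (by omega)

end BH

open Classical in
theorem stmt7_general (n : ℕ) (q : ℝ) (hq : q ∈ Set.Ioo (0 : ℝ) 1) (p : Fin (n + 1) → ℝ)
    (j : Fin (n + 1))
    (hrej : bhRejects (n + 1) q p j) :
    bhCount (n + 1) q p =
      1 + (Finset.univ.filter
            (fun i : Fin n =>
              (p ∘ j.succAbove) (Tuple.sort (p ∘ j.succAbove) i) ≤
                ((i : ℕ) + 2) * q / (n + 1))).sup (fun i => (i : ℕ) + 1) := by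
  set R := bhCount (n + 1) q p
  have hR_pos : 0 < R := bhCount_pos_of_bhRejects hq.1 hrej
  have hR_le : R ≤ n + 1 := bhCount_le
  have hR_card : R ≤ #{i | p i ≤ R * q / (n + 1 : ℕ)} := bhCount_le_card
  have hR_max : ∀ k, R < k → k ≤ n + 1 → #{i | p i ≤ k * q / (n + 1 : ℕ)} < k :=
    fun _ => card_lt_of_bhCount_lt
  have hpj : ∀ r : ℕ, R ≤ r → p j ≤ r * q / (n + 1 : ℕ) := fun r hr =>
    hrej.trans (by gcongr; exact hq.1.le)
  have hthreshold : ∀ i : ℕ, ((i : ℝ) + 2) = ((i + 1 : ℕ) : ℝ) + 1 := by intro i; push_cast; ring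
  simp only [hthreshold]
  rw [sup_filter_sort_le_eq_findGreatest (p ∘ j.succAbove)
    (fun r : ℕ => ((r : ℝ) + 1) * q / (n + 1))]
  suffices Nat.findGreatest
      (fun r => r ≤ #{i | (p ∘ j.succAbove) i ≤ ((r : ℝ) + 1) * q / (n + 1)}) n = R - 1 by omega
  rw [Nat.findGreatest_eq_iff]
  refine ⟨by omega, fun _ => ?_, fun k hk hkn hk_card => ?_⟩
  · rw [Fin.card_filter_univ_succAbove_of_pos _ (hpj R le_rfl)] at hR_card
    push_cast [Nat.cast_sub hR_pos] at hR_card ⊢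
    simpa using hR_card
  · have hcard := hR_max (k + 1) (by omega) (by omega)
    rw [Fin.card_filter_univ_succAbove_of_pos _ (hpj (k + 1) (by omega))] at hcard
    push_cast at hcard hk_card
    simp only [Function.comp_apply] at hk_card
    omega

open Classical in
/-- On the event that index `j` is rejected by BH at level `q` (with `m = n+1`
hypotheses), the rejection count is determined by the other `m−1` p-values:
`R(p) = 1 + max { r ∈ {0,…,m−1} : p^{(j)}_{(r)} ≤ (r+1)·q/m }`, where
`p^{(j)}_{(i+1)}` is the `(i+1)`-st order statistic of the p-values excluding
`p j` (the vector `p ∘ j.succAbove`), and the maximum over an empty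
condition-set is `0`. -/
theorem stmt7 (n : ℕ) (q : ℝ) (hq : q ∈ Set.Ioo (0 : ℝ) 1) (p : Fin (n + 1) → ℝ)
    (hp : ∀ i, p i ∈ Set.Icc (0 : ℝ) 1) (j : Fin (n + 1))
    (hrej : bhRejects (n + 1) q p j) :
    bhCount (n + 1) q p =
      1 + (Finset.univ.filter
            (fun i : Fin n =>
              (p ∘ j.succAbove) (Tuple.sort (p ∘ j.succAbove) i) ≤
                ((i : ℕ) + 2) * q / (n + 1))).sup (fun i => (i : ℕ) + 1) :=
  stmt7_general n q hq p j hrej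
end

section
/- Fix q ∈ (0,1), m ≥ 1, and an index j. For r = 1,…,m define the event C_r^{(j)}[q] on vectors x ∈ [0,1]^{m−1} (the p-values other than p_j) by: x_{(r−1)} ≤ rq/m, x_{(r)} > (r+1)q/m, x_{(r+1)} > (r+2)q/m, …, x_{(m−1)} > q (with x_{(0)} = 0). Then the events C_1^{(j)}[q], …, C_m^{(j)}[q] are pairwise disjoint and their union is all of [0,1]^{m−1}. -/
/-- The event `C_r^{(j)}[q]` on vectors `x ∈ ℝ^{m−1}` (the p-values other than
`p j`, with `m = n+1`): `x_{(r−1)} ≤ r·q/m` (vacuous for `r = 1`, i.e.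
`x_{(0)} = 0`) and `x_{(s)} > (s+1)·q/m` for `s = r, …, m−1`.  Order statistics:
`x_{(i+1)} = x (Tuple.sort x i)`. -/
def Cevent (n : ℕ) (q : ℝ) (r : ℕ) : Set (Fin n → ℝ) :=
  {x | (∀ i : Fin n, (i : ℕ) + 1 = r - 1 →
          x (Tuple.sort x i) ≤ (r : ℝ) * q / (n + 1)) ∧
       (∀ i : Fin n, r ≤ (i : ℕ) + 1 →
          x (Tuple.sort x i) > (((i : ℕ) : ℝ) + 2) * q / (n + 1))}

lemma Cevent_disj_aux (n r r' : ℕ) (q : ℝ) (hr : 1 ≤ r) (hr' : r' ≤ n + 1) (hlt : r < r') :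
    Disjoint (Cevent n q r) (Cevent n q r') := by
  rw [Set.disjoint_left]
  rintro x ⟨_, h2⟩ ⟨h1', _⟩
  have hi : r' - 2 < n := by omega
  have ha := h1' ⟨r' - 2, hi⟩ (by simp; omega)
  have hb := h2 ⟨r' - 2, hi⟩ (by simp; omega)
  have hc : ((r' - 2 : ℕ) : ℝ) + 2 = (r' : ℝ) := by
    have h2r : 2 ≤ r' := by omega
    push_cast [Nat.cast_sub h2r]
    ring
  rw [hc] at hb
  linarith

/-- The events `C_1^{(j)}[q], …, C_m^{(j)}[q]` are pairwise disjoint and their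
union covers all of `[0,1]^{m−1}`. -/
theorem stmt8 (n : ℕ) (q : ℝ) (hq : q ∈ Set.Ioo (0 : ℝ) 1) :
    (∀ r ∈ Finset.Icc 1 (n + 1), ∀ r' ∈ Finset.Icc 1 (n + 1), r ≠ r' →
        Disjoint (Cevent n q r) (Cevent n q r')) ∧
      {x : Fin n → ℝ | ∀ i, x i ∈ Set.Icc (0 : ℝ) 1} ⊆
        ⋃ r ∈ Finset.Icc 1 (n + 1), Cevent n q r := by
  constructor
  · intro r hr r' hr' hne
    simp only [Finset.mem_Icc] at hr hr'
    rcases Nat.lt_or_ge r r' with h | h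
    · exact Cevent_disj_aux n r r' q hr.1 hr'.2 h
    · exact (Cevent_disj_aux n r' r q hr'.1 hr.2 (by omega)).symm
  · intro x _
    simp only [Set.mem_iUnion, Finset.mem_Icc]
    set S : Finset (Fin n) :=
      Finset.univ.filter
        (fun i => x (Tuple.sort x i) ≤ (((i : ℕ) : ℝ) + 2) * q / (n + 1)) with hS
    rcases S.eq_empty_or_nonempty with he | hne
    · refine ⟨1, ⟨by omega, by omega⟩, ?_, ?_⟩
      · intro i hi; omega
      · intro i _
        by_contra hcon
        have : i ∈ S := by
          rw [hS, Finset.mem_filter]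
          exact ⟨Finset.mem_univ _, not_lt.mp hcon⟩
        simp [he] at this
    · set i₀ := S.max' hne with hi₀
      refine ⟨(i₀ : ℕ) + 2, ⟨by omega, by omega⟩, ?_, ?_⟩
      · intro i hi
        have : i = i₀ := Fin.ext (by omega)
        subst this
        have hmem : i₀ ∈ S := S.max'_mem hne
        rw [hS, Finset.mem_filter] at hmem
        have : (((i₀ : ℕ) + 2 : ℕ) : ℝ) = ((i₀ : ℕ) : ℝ) + 2 := by push_cast; ring
        rw [this]
        exact hmem.2
      · intro i hi
        by_contra hcon
        have hmem : i ∈ S := by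
          rw [hS, Finset.mem_filter]
          exact ⟨Finset.mem_univ _, not_lt.mp hcon⟩
        have := S.le_max' i hmem
        rw [← hi₀] at this
        have : (i : ℕ) ≤ (i₀ : ℕ) := this
        omega
end

section
/- Let P be a super-uniform random variable, m ≥ 1, q ∈ [0,1], g(m) = ∑_{i=1}^m 1/i, and let B_1,…,B_m be pairwise disjoint events with ⋃_s B_s having probability 1. Then ∑_{s=1}^{m} (1/s) ℙ( P ≤ s·q/(m·g(m)), B_s ) ≤ q/m. -/
open MeasureTheory
open scoped ENNReal

lemma BY_abel (c : ℝ) (v : ℕ → ℝ) (hv0 : v 0 = 0) :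
    ∀ n, 1 ≤ n → (∀ k, k ≤ n → v k ≤ k * c) →
    ∑ j ∈ Finset.Icc 1 n, (1/(j:ℝ)) * (v j - v (j-1)) ≤
      c * (∑ j ∈ Finset.Icc 1 n, 1/(j:ℝ)) - c + v n / n := by
  intro n
  induction n with
  | zero => omega
  | succ n ih =>
    intro _ hvle
    rw [Finset.sum_Icc_succ_top (by omega), Finset.sum_Icc_succ_top (by omega)]
    by_cases hn : 1 ≤ n
    · have H := ih hn (fun k hk => hvle k (by omega))
      have hv_n : v n ≤ n * c := hvle n (by omega)
      have hnpos : (0:ℝ) < n := by exact_mod_cast hn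
      have hn1pos : (0:ℝ) < (n:ℝ) + 1 := by linarith
      have hcast : ((n+1 : ℕ):ℝ) = (n:ℝ) + 1 := by push_cast; ring
      simp only [hcast, Nat.add_sub_cancel]
      have key : v n / ↑n ≤ (v n + c) / ((n:ℝ)+1) := by
        rw [div_le_div_iff₀ hnpos hn1pos]; nlinarith
      have h1 : 1 / ((n:ℝ)+1) * (v (n+1) - v n) + (v n + c) / ((n:ℝ)+1)
          = v (n+1) / ((n:ℝ)+1) + c / ((n:ℝ)+1) := by
        field_simp; ring
      have h2 : c * (∑ j ∈ Finset.Icc 1 n, 1/(j:ℝ) + 1/((n:ℝ)+1))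
          = c * (∑ j ∈ Finset.Icc 1 n, 1/(j:ℝ)) + c / ((n:ℝ)+1) := by ring
      linarith
    · have hn0 : n = 0 := by omega
      subst hn0
      simp [hv0]

/-- Single-hypothesis core of the Benjamini–Yekutieli correction for arbitrary
dependence: for a super-uniform `P`, `g(m) = ∑_{i=1}^m 1/i`, and pairwise
disjoint events `B 1, …, B m` whose union has probability one (no positive
dependence assumption), `∑_{s=1}^m (1/s)·ℙ(P ≤ s·q/(m·g(m)), B s) ≤ q/m`. -/
theorem stmt11 {Ω : Type*} [MeasurableSpace Ω] (μ : Measure Ω) [IsProbabilityMeasure μ]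
    (P : Ω → ℝ) (hP : Measurable P)
    (hsup : ∀ x ∈ Set.Icc (0 : ℝ) 1, μ {ω | P ω ≤ x} ≤ ENNReal.ofReal x)
    (m : ℕ) (hm : 1 ≤ m) (q : ℝ) (hq : q ∈ Set.Icc (0 : ℝ) 1)
    (g : ℕ → ℝ) (hg : ∀ n, g n = ∑ i ∈ Finset.Icc 1 n, (1 : ℝ) / i)
    (B : ℕ → Set Ω) (hBmeas : ∀ s, MeasurableSet (B s))
    (hdisj : ∀ s ∈ Finset.Icc 1 m, ∀ t ∈ Finset.Icc 1 m, s ≠ t → Disjoint (B s) (B t))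
    (hcover : μ (⋃ s ∈ Finset.Icc 1 m, B s) = 1) :
    ∑ s ∈ Finset.Icc 1 m,
        (1 / (s : ℝ≥0∞)) * μ ({ω | P ω ≤ (s : ℝ) * q / (m * g m)} ∩ B s) ≤
      ENNReal.ofReal (q / m) := by
  have hm0 : (0:ℝ) < m := by exact_mod_cast hm
  have hq0 : 0 ≤ q := hq.1
  have hq1 : q ≤ 1 := hq.2
  have hg1 : (1:ℝ) ≤ g m := by
    rw [hg]
    calc (1:ℝ) = ∑ i ∈ Finset.Icc (1:ℕ) 1, (1:ℝ)/(i:ℝ) := by simp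
    _ ≤ ∑ i ∈ Finset.Icc (1:ℕ) m, (1:ℝ)/(i:ℝ) := by
        apply Finset.sum_le_sum_of_subset_of_nonneg
        · exact Finset.Icc_subset_Icc_right hm
        · intro i _ _; positivity
  have hmg : (0:ℝ) < (m:ℝ) * g m := by nlinarith
  set c : ℝ := q / ((m:ℝ) * g m) with hc
  have hc0 : 0 ≤ c := div_nonneg hq0 hmg.le
  -- the grid sets
  set A : ℕ → Set Ω := fun j => {ω | P ω ≤ (j:ℝ) * c} with hA
  have hAmeas : ∀ j, MeasurableSet (A j) := fun j => hP measurableSet_Iic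
  have hAmono : ∀ j k, j ≤ k → A j ⊆ A k := by
    intro j k hjk ω hω
    have : (j:ℝ) * c ≤ (k:ℝ) * c := by
      apply mul_le_mul_of_nonneg_right _ hc0; exact_mod_cast hjk
    exact le_trans hω this
  have hkc : ∀ k, k ≤ m → (k:ℝ) * c ∈ Set.Icc (0:ℝ) 1 := by
    intro k hk
    constructor
    · positivity
    · have h1 : (k:ℝ) * c ≤ (m:ℝ) * c := by
        apply mul_le_mul_of_nonneg_right _ hc0; exact_mod_cast hk
      have h2 : (m:ℝ) * c = q / g m := by
        rw [hc]; field_simp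
      have h3 : q / g m ≤ q := by
        rw [div_le_iff₀ (by linarith)]; nlinarith
      linarith
  have hAle : ∀ k, k ≤ m → μ (A k) ≤ ENNReal.ofReal ((k:ℝ) * c) :=
    fun k hk => hsup _ (hkc k hk)
  have hA0 : μ (A 0) = 0 := by
    have := hAle 0 (Nat.zero_le m)
    simpa using this
  -- rewrite the sets in the goal
  have hset : ∀ s : ℕ, {ω | P ω ≤ (s:ℝ) * q / ((m:ℝ) * g m)} = A s := by
    intro s; ext ω; simp only [hA, Set.mem_setOf_eq, hc, mul_div_assoc]
  simp only [hset]
  -- step 1: A s is covered by A 0 and the ring differences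
  have hcov : ∀ s : ℕ, A s ⊆ A 0 ∪ ⋃ j ∈ Finset.Icc 1 s, (A j \ A (j-1)) := by
    intro s
    induction s with
    | zero => intro ω hω; exact Or.inl hω
    | succ s ih =>
      intro ω hω
      by_cases hs : ω ∈ A s
      · rcases ih hs with h | h
        · exact Or.inl h
        · right
          simp only [Set.mem_iUnion, Finset.mem_Icc] at h ⊢
          obtain ⟨j, hj, hωj⟩ := h
          exact ⟨j, ⟨hj.1, by omega⟩, hωj⟩
      · right
        simp only [Set.mem_iUnion, Finset.mem_Icc]
        exact ⟨s+1, ⟨by omega, le_refl _⟩, ⟨hω, by simpa using hs⟩⟩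
  have step1 : ∀ s : ℕ, μ (A s ∩ B s) ≤
      ∑ j ∈ Finset.Icc 1 s, μ ((A j \ A (j-1)) ∩ B s) := by
    intro s
    calc μ (A s ∩ B s) ≤ μ ((A 0 ∪ ⋃ j ∈ Finset.Icc 1 s, (A j \ A (j-1))) ∩ B s) :=
          measure_mono (Set.inter_subset_inter_left _ (hcov s))
    _ ≤ μ (A 0 ∪ ⋃ j ∈ Finset.Icc 1 s, ((A j \ A (j-1)) ∩ B s)) := by
        apply measure_mono
        rw [Set.union_inter_distrib_right, Set.iUnion_inter]
        apply Set.union_subset_union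
        · exact Set.inter_subset_left
        · apply Set.iUnion_mono; intro j
          rw [Set.iUnion_inter]
    _ ≤ μ (A 0) + μ (⋃ j ∈ Finset.Icc 1 s, ((A j \ A (j-1)) ∩ B s)) := measure_union_le _ _
    _ = μ (⋃ j ∈ Finset.Icc 1 s, ((A j \ A (j-1)) ∩ B s)) := by rw [hA0, zero_add]
    _ ≤ ∑ j ∈ Finset.Icc 1 s, μ ((A j \ A (j-1)) ∩ B s) := measure_biUnion_finset_le _ _
  -- main chain
  calc ∑ s ∈ Finset.Icc 1 m, (1 / (s : ℝ≥0∞)) * μ (A s ∩ B s)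
      ≤ ∑ s ∈ Finset.Icc 1 m, (1 / (s : ℝ≥0∞)) *
          ∑ j ∈ Finset.Icc 1 s, μ ((A j \ A (j-1)) ∩ B s) := by
        apply Finset.sum_le_sum; intro s _
        exact mul_le_mul_right (step1 s) _
    _ = ∑ s ∈ Finset.Icc 1 m, ∑ j ∈ Finset.Icc 1 s,
          (1 / (s : ℝ≥0∞)) * μ ((A j \ A (j-1)) ∩ B s) := by
        apply Finset.sum_congr rfl; intro s _; rw [Finset.mul_sum]
    _ = ∑ j ∈ Finset.Icc 1 m, ∑ s ∈ Finset.Icc j m,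
          (1 / (s : ℝ≥0∞)) * μ ((A j \ A (j-1)) ∩ B s) := by
        apply Finset.sum_comm'
        intro s j
        simp only [Finset.mem_Icc]
        omega
    _ ≤ ∑ j ∈ Finset.Icc 1 m, ∑ s ∈ Finset.Icc j m,
          (1 / (j : ℝ≥0∞)) * μ ((A j \ A (j-1)) ∩ B s) := by
        apply Finset.sum_le_sum; intro j hj
        apply Finset.sum_le_sum; intro s hs
        apply mul_le_mul_left
        apply ENNReal.div_le_div_left
        have : j ≤ s := (Finset.mem_Icc.mp hs).1
        exact_mod_cast this
    _ = ∑ j ∈ Finset.Icc 1 m, (1 / (j : ℝ≥0∞)) *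
          ∑ s ∈ Finset.Icc j m, μ ((A j \ A (j-1)) ∩ B s) := by
        apply Finset.sum_congr rfl; intro j _; rw [Finset.mul_sum]
    _ ≤ ∑ j ∈ Finset.Icc 1 m, (1 / (j : ℝ≥0∞)) * μ (A j \ A (j-1)) := by
        apply Finset.sum_le_sum; intro j hj
        apply mul_le_mul_right
        calc ∑ s ∈ Finset.Icc j m, μ ((A j \ A (j-1)) ∩ B s)
            = μ (⋃ s ∈ Finset.Icc j m, ((A j \ A (j-1)) ∩ B s)) := by
              rw [measure_biUnion_finset]
              · intro s hs t ht hst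
                apply Set.disjoint_left.mpr
                intro ω hωs hωt
                have hj1 := Finset.mem_Icc.mp hj
                have hs1 := Finset.mem_Icc.mp hs
                have ht1 := Finset.mem_Icc.mp ht
                exact Set.disjoint_left.mp
                  (hdisj s (Finset.mem_Icc.mpr ⟨by omega, hs1.2⟩)
                    t (Finset.mem_Icc.mpr ⟨by omega, ht1.2⟩) hst) hωs.2 hωt.2
              · intro s _
                exact (((hAmeas j).diff (hAmeas (j-1))).inter (hBmeas s))
          _ ≤ μ (A j \ A (j-1)) := by
              apply measure_mono
              exact Set.iUnion₂_subset fun s _ => Set.inter_subset_left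
    _ ≤ ENNReal.ofReal (q / m) := by
        have hfin : ∀ j ∈ Finset.Icc 1 m,
            (1 / (j : ℝ≥0∞)) * μ (A j \ A (j-1)) ≠ ⊤ := by
          intro j hj
          have hj1 := (Finset.mem_Icc.mp hj).1
          apply ENNReal.mul_ne_top
          · rw [ne_eq, ENNReal.div_eq_top]
            push_neg
            exact ⟨fun _ => Nat.cast_ne_zero.mpr (by omega),
              fun h => absurd h ENNReal.one_ne_top⟩
          · exact measure_ne_top μ _
        rw [ENNReal.le_ofReal_iff_toReal_le (ENNReal.sum_ne_top.mpr hfin)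
          (by positivity)]
        rw [ENNReal.toReal_sum hfin]
        -- switch to real numbers
        set v : ℕ → ℝ := fun k => (μ (A k)).toReal with hv
        have hv0 : v 0 = 0 := by rw [hv]; simp [hA0]
        have hvle : ∀ k, k ≤ m → v k ≤ (k:ℝ) * c := by
          intro k hk
          exact ENNReal.toReal_le_of_le_ofReal (by positivity) (hAle k hk)
        have hterm : ∀ j ∈ Finset.Icc 1 m,
            ((1 / (j : ℝ≥0∞)) * μ (A j \ A (j-1))).toReal
              = (1/(j:ℝ)) * (v j - v (j-1)) := by
          intro j hj
          have hj1 := (Finset.mem_Icc.mp hj).1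
          have hsub : A (j-1) ⊆ A j := hAmono _ _ (by omega)
          have hdiff : μ (A j \ A (j-1)) = μ (A j) - μ (A (j-1)) :=
            measure_diff hsub (hAmeas (j-1)).nullMeasurableSet (measure_ne_top μ _)
          rw [ENNReal.toReal_mul, hdiff,
            ENNReal.toReal_sub_of_le (measure_mono hsub) (measure_ne_top μ _)]
          congr 1
          rw [ENNReal.toReal_div]
          simp
        rw [Finset.sum_congr rfl hterm]
        have habel := BY_abel c v hv0 m hm hvle
        have hvm : v m / m ≤ c := by
          rw [div_le_iff₀ hm0]
          have := hvle m le_rfl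
          linarith
        have hgm : c * g m = q / m := by
          rw [hc]
          field_simp
        rw [hg] at hgm
        calc ∑ j ∈ Finset.Icc 1 m, (1/(j:ℝ)) * (v j - v (j-1))
            ≤ c * (∑ j ∈ Finset.Icc 1 m, 1/(j:ℝ)) - c + v m / m := habel
          _ ≤ c * (∑ j ∈ Finset.Icc 1 m, 1/(j:ℝ)) := by linarith
          _ = q / m := hgm
end

section
/- Consonance implies error-rate monotonicity across levels (Proposition 1): consider a finite rooted tree of hypotheses with random selection sets S_i^k ⊆ F_i^k for each selected node, and define recursively error measures by assigning to each selected node at level ℓ the indicator that it is a true null, assigning to each selected node at level k < ℓ the average of the error measures of its selected children (0 if it has none), and to level ℓ−1 the analogous quantities one level up; suppose that whenever a node at level ℓ−1 is selected, at least one of its children is selected, and that a selected true-null node has only true-null descendants. Then, pointwise on every realization, the level-(ℓ−1) aggregated false discovery proportion is at most the level-ℓ aggregated false discovery proportion, and hence sFDR^{ℓ−1} ≤ sFDR^{ℓ}. -/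
/-- Proposition 1 (pointwise version): consonance implies monotonicity of the
selective FDP across levels.  `sel i` is the set of selected children of a
selected node `i`, `agg d i` is the recursively aggregated error measure
(indicator of a true null at depth `0`, average over selected children
otherwise), and `reach d` is the set of selected nodes at depth `d` from the
root.  If every hypothesis selected at level `ℓ−1` has at least one selected
child (consonance), and true nulls have only true-null descendants, then on
every realization `sFDP^{ℓ−1} = agg (ℓ−1) root ≤ agg ℓ root = sFDP^ℓ`. -/
theorem stmt14 {ι : Type*} [DecidableEq ι] (children sel : ι → Finset ι)
    (hsub : ∀ i, sel i ⊆ children i)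
    (isNull : ι → Prop) [DecidablePred isNull]
    (hered : ∀ i, isNull i → ∀ j ∈ children i, isNull j)
    (root : ι) (ℓ : ℕ) (hℓ : 1 ≤ ℓ)
    (agg : ℕ → ι → ℝ)
    (hagg0 : ∀ i, agg 0 i = if isNull i then 1 else 0)
    (haggs : ∀ d i, agg (d + 1) i =
      (∑ j ∈ sel i, agg d j) / (max (sel i).card 1 : ℝ))
    (reach : ℕ → Finset ι)
    (hreach0 : reach 0 = {root})
    (hreachs : ∀ d, reach (d + 1) = (reach d).biUnion sel)
    (hcons : ∀ i ∈ reach (ℓ - 1), (sel i).Nonempty) :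
    agg (ℓ - 1) root ≤ agg ℓ root := by
  have hMpos : ∀ i : ι, (0 : ℝ) < (max (sel i).card 1 : ℝ) := by
    intro i
    have : 1 ≤ max (sel i).card 1 := le_max_right _ _
    exact_mod_cast Nat.lt_of_lt_of_le Nat.zero_lt_one this
  have hnonneg : ∀ d i, 0 ≤ agg d i := by
    intro d
    induction d with
    | zero => intro i; rw [hagg0]; positivity
    | succ d ih =>
        intro i
        rw [haggs]
        exact div_nonneg (Finset.sum_nonneg fun j _ => ih j) (hMpos i).le
  set m := ℓ - 1 with hm
  have key : ∀ d, d ≤ m → ∀ i ∈ reach (m - d), agg d i ≤ agg (d + 1) i := by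
    intro d
    induction d with
    | zero =>
        intro _ i hi
        have hi' : i ∈ reach m := by simpa using hi
        have hne := hcons i hi'
        rw [hagg0, haggs]
        by_cases hnull : isNull i
        · simp only [hnull, if_true]
          have hall : ∀ j ∈ sel i, agg 0 j = 1 := by
            intro j hj
            rw [hagg0, if_pos (hered i hnull j (hsub i hj))]
          rw [Finset.sum_congr rfl hall, Finset.sum_const, nsmul_eq_mul, mul_one]
          have hcard : 1 ≤ (sel i).card := Finset.one_le_card.mpr hne
          have hcard' : (1 : ℝ) ≤ ((sel i).card : ℝ) := by exact_mod_cast hcard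
          rw [max_eq_left hcard']
          rw [div_self (by linarith)]
        · simp only [hnull, if_false]
          exact div_nonneg (Finset.sum_nonneg fun j _ => by
            rw [hagg0]; positivity) (hMpos i).le
    | succ d ih =>
        intro hd i hi
        have hd' : d ≤ m := Nat.le_of_succ_le hd
        have hstep : m - (d + 1) + 1 = m - d := by omega
        have hj : ∀ j ∈ sel i, j ∈ reach (m - d) := by
          intro j hjs
          rw [← hstep, hreachs]
          exact Finset.mem_biUnion.mpr ⟨i, hi, hjs⟩
        rw [haggs, haggs]
        gcongr with j hjs
        exact ih hd' j (hj j hjs)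
  have hroot : root ∈ reach (m - m) := by
    simp [hreach0]
  have := key m le_rfl root hroot
  have hml : m + 1 = ℓ := by omega
  rwa [hml] at this
end

section
/- If X = (X_1,…,X_n) is PRDS on I_0 and D ⊆ ℝ^n is an increasing set, then for each i ∈ I_0 and any 0 < a ≤ b ≤ 1, ℙ(X ∈ D | X_i ≤ a) ≤ ℙ(X ∈ D | X_i ≤ b), provided ℙ(X_i ≤ a) > 0. -/
/-!
Write `ν` for the law of `X_i` and `f` for the monotone version of `x ↦ ℙ(X ∈ D | X_i = x)`.
Then `ℙ(X ∈ D | X_i ≤ t) = ν(Iic t)⁻¹ ∫_{Iic t} f dν`. On `Iic a` the integrand is at most `f a`,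
on `Ioc a b` at least `f a`, so averaging over the larger interval `Iic b` cannot decrease the
mean.
-/

open MeasureTheory ProbabilityTheory Set

theorem Monotone.setIntegral_Iic_mul_le {ν : Measure ℝ} [IsFiniteMeasure ν] {f : ℝ → ℝ}
    (hf : Monotone f) {a b : ℝ} (hab : a ≤ b) :
    (∫ x in Iic a, f x ∂ν) * ν.real (Iic b) ≤ (∫ x in Iic b, f x ∂ν) * ν.real (Iic a) := by
  by_cases hint : IntegrableOn f (Iic a) ν
  swap
  · -- both integrals are junk `0`, since `f` is not integrable on the larger `Iic b` either
    have hint' : ¬IntegrableOn f (Iic b) ν := fun h ↦ hint (h.mono_set (Iic_subset_Iic.2 hab))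
    simp [integral_undef hint, integral_undef hint']
  have hdisj : Disjoint (Iic a) (Ioc a b) := Iic_disjoint_Ioc le_rfl
  have hsplit : Iic a ∪ Ioc a b = Iic b := Iic_union_Ioc_eq_Iic hab
  have hint_Ioc : IntegrableOn f (Ioc a b) ν :=
    (hf.locallyIntegrable.integrableOn_isCompact isCompact_Icc).mono_set Ioc_subset_Icc_self
  have hle : ∫ x in Iic a, f x ∂ν ≤ f a * ν.real (Iic a) := by
    simpa [mul_comm] using setIntegral_mono_on hint (integrableOn_const (measure_ne_top ν _))
      measurableSet_Iic fun x hx ↦ hf hx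
  have hge : f a * ν.real (Ioc a b) ≤ ∫ x in Ioc a b, f x ∂ν :=
    setIntegral_ge_of_const_le_real measurableSet_Ioc (measure_ne_top ν _)
      (fun x hx ↦ hf hx.1.le) hint_Ioc
  rw [← hsplit, setIntegral_union hdisj measurableSet_Ioc hint hint_Ioc,
    measureReal_union hdisj measurableSet_Ioc]
  nlinarith [mul_le_mul_of_nonneg_right hle (measureReal_nonneg : 0 ≤ ν.real (Ioc a b)),
    mul_le_mul_of_nonneg_right hge (measureReal_nonneg : 0 ≤ ν.real (Iic a))]

theorem Monotone.ofReal_setIntegral_Iic_mul_le {ν : Measure ℝ} [IsFiniteMeasure ν] {f : ℝ → ℝ}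
    (hf : Monotone f) {a b : ℝ} (hab : a ≤ b) :
    ENNReal.ofReal (∫ x in Iic a, f x ∂ν) * ν (Iic b) ≤
      ENNReal.ofReal (∫ x in Iic b, f x ∂ν) * ν (Iic a) := by
  rw [← ofReal_measureReal, ← ofReal_measureReal, ← ENNReal.ofReal_mul' measureReal_nonneg,
    ← ENNReal.ofReal_mul' measureReal_nonneg]
  exact ENNReal.ofReal_le_ofReal (hf.setIntegral_Iic_mul_le hab)

theorem ProbabilityTheory.cond_le_cond_of_mul_le {Ω : Type*} [MeasurableSpace Ω] {μ : Measure Ω}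
    [IsFiniteMeasure μ] {s t E : Set Ω} (hs : MeasurableSet s) (ht : MeasurableSet t) (hst : μ s ≤ μ t)
    (h : μ (s ∩ E) * μ t ≤ μ (t ∩ E) * μ s) : μ[E|s] ≤ μ[E|t] := by
  rcases eq_or_ne (μ s) 0 with hs0 | hs0
  · simp [cond_eq_zero_of_meas_eq_zero hs0]
  have ht0 : μ t ≠ 0 := (pos_iff_ne_zero.2 hs0).trans_le hst |>.ne'
  rw [cond_apply hs, cond_apply ht, ← ENNReal.div_eq_inv_mul, ← ENNReal.div_eq_inv_mul,
    ENNReal.le_div_iff_mul_le (Or.inl ht0) (Or.inl (measure_ne_top μ t)),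
    ← ENNReal.mul_div_right_comm]
  exact ENNReal.div_le_of_le_mul h

theorem stmt18_general {Ω : Type*} [MeasurableSpace Ω] (μ : Measure Ω) [IsProbabilityMeasure μ]
    (n : ℕ) (X : Ω → (Fin n → ℝ)) (hX : Measurable X)
    (i : Fin n)
    (D : Set (Fin n → ℝ))
    (f : ℝ → ℝ) (hf : Monotone f)
    (hker : ∀ s : Set ℝ, MeasurableSet s →
      μ ({ω | X ω i ∈ s} ∩ {ω | X ω ∈ D}) =
        ENNReal.ofReal (∫ x in s, f x ∂(μ.map (fun ω => X ω i))))
    (a b : ℝ) (hab : a ≤ b) :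
    (ProbabilityTheory.cond μ {ω | X ω i ≤ a}) {ω | X ω ∈ D} ≤
      (ProbabilityTheory.cond μ {ω | X ω i ≤ b}) {ω | X ω ∈ D} := by
  have hXi : Measurable fun ω ↦ X ω i := (measurable_pi_apply i).comp hX
  have hlaw : ∀ t, μ {ω | X ω i ≤ t} = μ.map (fun ω ↦ X ω i) (Iic t) := fun t ↦
    (Measure.map_apply hXi measurableSet_Iic).symm
  have hjoint : ∀ t, μ ({ω | X ω i ≤ t} ∩ {ω | X ω ∈ D}) =
      ENNReal.ofReal (∫ x in Iic t, f x ∂(μ.map (fun ω ↦ X ω i))) := fun t ↦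
    hker (Iic t) measurableSet_Iic
  have hmeas : ∀ t, MeasurableSet {ω | X ω i ≤ t} := fun t ↦ hXi measurableSet_Iic
  refine cond_le_cond_of_mul_le (hmeas a) (hmeas b)
    (measure_mono fun ω hω ↦ le_trans hω hab) ?_
  rw [hjoint, hjoint, hlaw, hlaw]
  exact hf.ofReal_setIntegral_Iic_mul_le hab

/-- PRDS monotonicity of sub-level conditioning: if `X` is PRDS on `I₀` — i.e.
for each increasing set `D` and `i ∈ I₀` there is a monotone version
`f x = ℙ(X ∈ D | X_i = x)` of the conditional probability — then for `i ∈ I₀`,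
an increasing measurable `D`, and `0 < a ≤ b ≤ 1` with `ℙ(X_i ≤ a) > 0`,
`ℙ(X ∈ D | X_i ≤ a) ≤ ℙ(X ∈ D | X_i ≤ b)`. -/
theorem stmt18 {Ω : Type*} [MeasurableSpace Ω] (μ : Measure Ω) [IsProbabilityMeasure μ]
    (n : ℕ) (X : Ω → (Fin n → ℝ)) (hX : Measurable X)
    (I0 : Set (Fin n)) (i : Fin n) (hi : i ∈ I0)
    (D : Set (Fin n → ℝ)) (hD : MeasurableSet D)
    (hinc : ∀ x ∈ D, ∀ y : Fin n → ℝ, (∀ k, x k ≤ y k) → y ∈ D)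
    (f : ℝ → ℝ) (hf : Monotone f) (hf0 : ∀ x, 0 ≤ f x) (hf1 : ∀ x, f x ≤ 1)
    (hker : ∀ s : Set ℝ, MeasurableSet s →
      μ ({ω | X ω i ∈ s} ∩ {ω | X ω ∈ D}) =
        ENNReal.ofReal (∫ x in s, f x ∂(μ.map (fun ω => X ω i))))
    (a b : ℝ) (ha : 0 < a) (hab : a ≤ b) (hb : b ≤ 1)
    (hpos : 0 < μ {ω | X ω i ≤ a}) :
    (ProbabilityTheory.cond μ {ω | X ω i ≤ a}) {ω | X ω ∈ D} ≤
      (ProbabilityTheory.cond μ {ω | X ω i ≤ b}) {ω | X ω ∈ D} :=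
  stmt18_general μ n X hX i D f hf hker a b hab
end
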